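/- Let m, c, n₀, γ > 0. Then for each i ∈ {1,2,3}, c ∫_{ℝ³} p_i² J(p) dp = n₀ m² c³ K₃(γ) / (γ K₂(γ)). -/

import Mathlib

noncomputable section

open MeasureTheory

/-- Euclidean inner product on ℝ³. -/
def dot3 (p q : Fin 3 → ℝ) : ℝ := ∑ i, p i * q i

/-- The relativistic energy `p⁰ = √(m²c² + |p|²)`. -/
noncomputable def pZero (m c : ℝ) (p : Fin 3 → ℝ) : ℝ :=
  Real.sqrt (m ^ 2 * c ^ 2 + dot3 p p)

/-- Modified Bessel function of the second kind (integral formula). -/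
noncomputable def Kbessel (j : ℕ) (γ : ℝ) : ℝ :=
  (2 ^ j * (Nat.factorial j : ℝ) / (Nat.factorial (2 * j) : ℝ)) * γ ^ (-(j : ℤ)) *
    ∫ l in Set.Ioi γ, Real.exp (-l) * (l ^ 2 - γ ^ 2) ^ ((j : ℝ) - 1 / 2)

/-- The rest-frame relativistic Maxwellian (Jüttner distribution)
`J(p) = [n₀γ/(4πm³c³K₂(γ))] exp(−γp⁰/(mc))`. -/
noncomputable def Juttner (m c n₀ γ : ℝ) (p : Fin 3 → ℝ) : ℝ :=
  n₀ * γ / (4 * Real.pi * m ^ 3 * c ^ 3 * Kbessel 2 γ) *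
    Real.exp (-(γ * pZero m c p) / (m * c))

/-
The Jüttner density is radial, so by permutation symmetry of the coordinates
`∫ pᵢ² J = (1/3) ∫ |p|² J`, and polar coordinates turn the latter into
`4π ∫₀^∞ r⁴ exp(-γ √(m²c² + r²)/(mc)) dr`. The substitution `l = γ √(m²c² + r²)/(mc)`
makes this `(mc/γ)⁵ ∫_γ^∞ e^{-l} (l² - γ²)^{3/2} l dl`, and one integration by parts
(`(l² - γ²)^{3/2} l` is the derivative of `(l² - γ²)^{5/2}/5`) identifies the last integral
with `3 γ³ K₃(γ)`.
-/

open Set Real Filter Topology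

theorem EuclideanSpace.integral_sq_apply_mul_norm_eq {ι : Type*} [Fintype ι] (f : ℝ → ℝ)
    (i j : ι) :
    ∫ x : EuclideanSpace ℝ ι, x i ^ 2 * f ‖x‖ = ∫ x : EuclideanSpace ℝ ι, x j ^ 2 * f ‖x‖ := by
  classical
  let σ := LinearIsometryEquiv.piLpCongrLeft 2 ℝ ℝ (Equiv.swap i j)
  rw [← σ.measurePreserving.integral_comp σ.toHomeomorph.measurableEmbedding]
  congr with x
  simp [σ, Equiv.piCongrLeft'_apply]

theorem EuclideanSpace.card_mul_integral_sq_apply_mul_norm {ι : Type*} [Fintype ι] {f : ℝ → ℝ}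
    (hf : Measurable f) (hint : Integrable fun x : EuclideanSpace ℝ ι => ‖x‖ ^ 2 * f ‖x‖)
    (i : ι) :
    Fintype.card ι * ∫ x : EuclideanSpace ℝ ι, x i ^ 2 * f ‖x‖
      = ∫ x : EuclideanSpace ℝ ι, ‖x‖ ^ 2 * f ‖x‖ := by
  have hcoord (j : ι) : Integrable fun x : EuclideanSpace ℝ ι => x j ^ 2 * f ‖x‖ := by
    refine hint.mono (by fun_prop) (.of_forall fun x => ?_)
    simp only [norm_mul, norm_pow, Real.norm_eq_abs, sq_abs, abs_norm]
    refine mul_le_mul_of_nonneg_right ?_ (abs_nonneg _)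
    rw [EuclideanSpace.real_norm_sq_eq]
    exact Finset.single_le_sum (f := fun k => x k ^ 2) (fun k _ => sq_nonneg _) (Finset.mem_univ j)
  simp_rw [EuclideanSpace.real_norm_sq_eq, Finset.sum_mul]
  rw [integral_finsetSum _ fun j _ => hcoord j]
  simp [EuclideanSpace.integral_sq_apply_mul_norm_eq f _ i]

theorem EuclideanSpace.integral_fun_norm_fin_three (f : ℝ → ℝ) :
    ∫ x : EuclideanSpace ℝ (Fin 3), f ‖x‖ = 4 * π * ∫ r in Ioi 0, r ^ 2 * f r := by
  rw [integral_fun_norm_addHaar, measureReal_def, EuclideanSpace.volume_ball_fin_three]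
  simp only [finrank_euclideanSpace, Fintype.card_fin, ENNReal.ofReal_one, one_pow, one_mul,
    Nat.add_one_sub_one, smul_eq_mul, nsmul_eq_mul, Nat.cast_ofNat]
  rw [ENNReal.toReal_ofReal (by positivity)]
  ring

theorem integrableOn_exp_neg_mul_sq_sub_sq_rpow_mul_pow {γ q : ℝ} (hγ : 0 ≤ γ) (hq : 0 ≤ q)
    (k : ℕ) :
    IntegrableOn (fun l => exp (-l) * (l ^ 2 - γ ^ 2) ^ q * l ^ k) (Ioi γ) := by
  have hdom : IntegrableOn (fun l => exp (-l) * l ^ ((k + 2 * q + 1) - 1)) (Ioi γ) :=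
    (GammaIntegral_convergent (by positivity)).mono_set (Ioi_subset_Ioi hγ)
  refine hdom.mono' (by fun_prop) ?_
  filter_upwards [ae_restrict_mem measurableSet_Ioi] with l (hl : γ < l)
  have hl0 : 0 < l := hγ.trans_lt hl
  have hsub : 0 ≤ l ^ 2 - γ ^ 2 := by nlinarith
  have hpow : (l ^ 2 - γ ^ 2) ^ q ≤ l ^ (2 * q) := by
    calc (l ^ 2 - γ ^ 2) ^ q ≤ (l ^ 2) ^ q := by gcongr; linarith [sq_nonneg γ]
      _ = l ^ (2 * q) := by rw [← rpow_natCast, ← rpow_mul hl0.le]; norm_num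
  rw [norm_of_nonneg (by positivity), add_sub_cancel_right, rpow_add hl0, rpow_natCast]
  calc exp (-l) * (l ^ 2 - γ ^ 2) ^ q * l ^ k ≤ exp (-l) * l ^ (2 * q) * l ^ k := by gcongr
    _ = exp (-l) * (l ^ k * l ^ (2 * q)) := by ring

theorem integral_exp_neg_mul_sq_sub_sq_rpow_add_one {γ q : ℝ} (hγ : 0 ≤ γ) (hq : 0 ≤ q) :
    ∫ l in Ioi γ, exp (-l) * (l ^ 2 - γ ^ 2) ^ (q + 1)
      = 2 * (q + 1) * ∫ l in Ioi γ, exp (-l) * (l ^ 2 - γ ^ 2) ^ q * l := by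
  set v : ℝ → ℝ := fun l => (l ^ 2 - γ ^ 2) ^ (q + 1)
  have hv_cont : Continuous v :=
    (continuous_pow 2 |>.sub continuous_const).rpow_const fun _ => Or.inr (by linarith)
  have hv_deriv (l : ℝ) : HasDerivAt v (2 * (q + 1) * ((l ^ 2 - γ ^ 2) ^ q * l)) l := by
    have := ((hasDerivAt_pow 2 l).sub_const (γ ^ 2)).rpow_const (p := q + 1)
      (Or.inr (by linarith))
    convert this using 1
    rw [add_sub_cancel_right]
    push_cast
    ring
  have h_infty : Tendsto (fun l => exp (-l) * v l) atTop (𝓝 0) := by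
    refine squeeze_zero_norm' ?_
      (tendsto_rpow_mul_exp_neg_mul_atTop_nhds_zero (2 * (q + 1)) 1 one_pos)
    filter_upwards [eventually_gt_atTop γ] with l hl
    have hl0 : 0 < l := hγ.trans_lt hl
    have hsub : 0 ≤ l ^ 2 - γ ^ 2 := by nlinarith
    have hpow : v l ≤ l ^ (2 * (q + 1)) := by
      calc v l ≤ (l ^ 2) ^ (q + 1) := rpow_le_rpow hsub (by nlinarith) (by linarith)
        _ = l ^ (2 * (q + 1)) := by rw [← rpow_natCast, ← rpow_mul hl0.le]; norm_num
    rw [norm_of_nonneg (by positivity), neg_one_mul, mul_comm]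
    exact mul_le_mul_of_nonneg_right hpow (exp_pos _).le
  have h_zero : Tendsto (fun l => exp (-l) * v l) (𝓝[>] γ) (𝓝 0) := by
    have h : Tendsto (fun l => exp (-l) * v l) (𝓝 γ) (𝓝 (exp (-γ) * v γ)) :=
      ((continuous_exp.comp continuous_neg).mul hv_cont).tendsto γ
    simpa [v, zero_rpow (by linarith : q + 1 ≠ 0)] using h.mono_left nhdsWithin_le_nhds
  have ibp := integral_Ioi_mul_deriv_eq_deriv_mul (u := fun l => exp (-l)) (v := v)
    (u' := fun l => -exp (-l)) (fun l _ => by simpa using (hasDerivAt_neg l).exp)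
    (fun l _ => hv_deriv l) ?_ ?_ h_zero h_infty
  · simp only [sub_zero, zero_sub, neg_mul, integral_neg, neg_neg, v] at ibp
    rw [← ibp, ← integral_const_mul]
    congr with l
    ring
  · refine IntegrableOn.congr_fun
      ((integrableOn_exp_neg_mul_sq_sub_sq_rpow_mul_pow hγ hq 1).const_mul (2 * (q + 1)))
      (fun l _ => ?_) measurableSet_Ioi
    simp only [Pi.mul_apply]
    ring
  · refine (integrableOn_exp_neg_mul_sq_sub_sq_rpow_mul_pow hγ (q := q + 1) (by linarith)
      0).neg.congr_fun (fun l _ => ?_) measurableSet_Ioi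
    simp [v]

theorem integral_exp_neg_mul_sq_sub_sq_rpow_eq_Kbessel (j : ℕ) {γ : ℝ} (hγ : γ ≠ 0) :
    ∫ l in Ioi γ, exp (-l) * (l ^ 2 - γ ^ 2) ^ ((j : ℝ) - 1 / 2)
      = (2 * j).factorial / (2 ^ j * j.factorial) * γ ^ j * Kbessel j γ := by
  rw [Kbessel, zpow_neg, zpow_natCast]
  field_simp

/-- The radial profile of the Jüttner distribution: `a` stands for `m c` and `r` for `|p|`. -/
def juttnerProfile (a γ r : ℝ) : ℝ :=
  exp (-(γ * √(a ^ 2 + r ^ 2)) / a)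

section JuttnerProfile

variable {a γ : ℝ}

@[fun_prop]
theorem continuous_juttnerProfile : Continuous (juttnerProfile a γ) := by
  unfold juttnerProfile
  fun_prop

theorem integrableOn_pow_mul_juttnerProfile (ha : 0 < a) (hγ : 0 < γ) (k : ℕ) :
    IntegrableOn (fun r => r ^ k * juttnerProfile a γ r) (Ioi 0) := by
  have hdom := integrableOn_rpow_mul_exp_neg_mul_rpow (s := k) (p := 1) (b := γ / a)
    (by linarith [k.cast_nonneg (α := ℝ)]) one_pos (by positivity)
  refine hdom.mono' (by fun_prop) ?_
  filter_upwards [ae_restrict_mem measurableSet_Ioi] with r (hr : 0 < r)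
  have hsqrt : r ≤ √(a ^ 2 + r ^ 2) := le_sqrt_of_sq_le (by nlinarith)
  rw [norm_of_nonneg (by unfold juttnerProfile; positivity), rpow_natCast, rpow_one]
  gcongr
  rw [juttnerProfile, neg_div, mul_div_right_comm, neg_mul]
  gcongr

theorem integral_pow_four_mul_juttnerProfile (ha : 0 < a) (hγ : 0 < γ) :
    ∫ r in Ioi 0, r ^ 4 * juttnerProfile a γ r
      = (a / γ) ^ 5 * ∫ l in Ioi γ, exp (-l) * (l ^ 2 - γ ^ 2) ^ (3 / 2 : ℝ) * l := by
  -- Substitute `l = γ √(a² + r²) / a`, under which `l² - γ² = (γ r / a)²`.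
  set f : ℝ → ℝ := fun r => γ * √(a ^ 2 + r ^ 2) / a
  set f' : ℝ → ℝ := fun r => γ * r / (a * √(a ^ 2 + r ^ 2))
  set g : ℝ → ℝ := fun l => exp (-l) * (l ^ 2 - γ ^ 2) ^ (3 / 2 : ℝ) * l
  have hrad_pos (r : ℝ) : 0 < a ^ 2 + r ^ 2 := by positivity
  have hsqrt_pos (r : ℝ) : 0 < √(a ^ 2 + r ^ 2) := sqrt_pos.2 (hrad_pos r)
  have hf_cont : Continuous f := by fun_prop
  have hg_cont : Continuous g :=
    (continuous_exp.comp continuous_neg).mul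
      ((continuous_pow 2 |>.sub continuous_const).rpow_const fun _ => Or.inr (by norm_num))
      |>.mul continuous_id
  have hf_ge (r : ℝ) : γ ≤ f r := by
    rw [le_div_iff₀ ha]
    gcongr
    exact le_sqrt_of_sq_le (by nlinarith [sq_nonneg r])
  have hf_deriv (r : ℝ) : HasDerivAt f (f' r) r := by
    have := (((hasDerivAt_pow 2 r).const_add (a ^ 2)).sqrt (hrad_pos r).ne').const_mul γ
      |>.div_const a
    refine this.congr_deriv ?_
    norm_num [f']
    field_simp
  have hf_tendsto : Tendsto f atTop atTop := by
    refine tendsto_atTop_mono (fun r => ?_) (tendsto_id.const_mul_atTop (div_pos hγ ha))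
    simp only [id, f, div_mul_eq_mul_div]
    gcongr
    exact le_sqrt_of_sq_le (by nlinarith)
  have hsubst (r : ℝ) (hr : 0 ≤ r) :
      (g ∘ f) r * f' r = (γ / a) ^ 5 * (r ^ 4 * juttnerProfile a γ r) := by
    have hs : √(a ^ 2 + r ^ 2) ^ 2 = a ^ 2 + r ^ 2 := sq_sqrt (hrad_pos r).le
    have hdiff : f r ^ 2 - γ ^ 2 = (γ * r / a) ^ 2 := by
      simp only [f]
      field_simp
      rw [hs]
      ring
    have hpow : ((γ * r / a) ^ 2) ^ (3 / 2 : ℝ) = (γ * r / a) ^ 3 := by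
      rw [← rpow_natCast, ← rpow_mul (by positivity)]
      norm_num
    have hsq := (hsqrt_pos r).ne'
    simp only [Function.comp_apply, g, hdiff, hpow, juttnerProfile, f', f, neg_div]
    field_simp
  have hf_zero : f 0 = γ := by
    simp only [f]
    rw [zero_pow two_ne_zero, add_zero, sqrt_sq ha.le]
    field_simp
  have hg_int : IntegrableOn g (Ici γ) := by
    rw [integrableOn_Ici_iff_integrableOn_Ioi]
    simpa [g] using integrableOn_exp_neg_mul_sq_sub_sq_rpow_mul_pow hγ.le
      (q := 3 / 2) (by norm_num) 1
  have hprofile_int : IntegrableOn (fun r => (g ∘ f) r * f' r) (Ici 0) := by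
    rw [integrableOn_Ici_iff_integrableOn_Ioi]
    exact IntegrableOn.congr_fun ((integrableOn_pow_mul_juttnerProfile ha hγ 4).const_mul _)
      (fun r hr => (hsubst r (le_of_lt hr)).symm) measurableSet_Ioi
  have key := integral_comp_mul_deriv_Ioi hf_cont.continuousOn hf_tendsto
    (fun r _ => (hf_deriv r).hasDerivWithinAt) hg_cont.continuousOn
    (hg_int.mono_set (image_subset_iff.2 fun r _ => hf_ge r)) hprofile_int
  rw [hf_zero, setIntegral_congr_fun measurableSet_Ioi fun r hr => hsubst r (le_of_lt hr),
    integral_const_mul] at key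
  rw [← key]
  field_simp

end JuttnerProfile

theorem integral_sq_apply_mul_juttnerProfile {a γ : ℝ} (ha : 0 < a) (hγ : 0 < γ) (i : Fin 3) :
    ∫ x : EuclideanSpace ℝ (Fin 3), x i ^ 2 * juttnerProfile a γ ‖x‖
      = 4 * π * a ^ 5 * Kbessel 3 γ / γ ^ 2 := by
  have hint : Integrable fun x : EuclideanSpace ℝ (Fin 3) => ‖x‖ ^ 2 * juttnerProfile a γ ‖x‖ := by
    refine (integrable_fun_norm_addHaar volume (f := fun r => r ^ 2 * juttnerProfile a γ r)).2 ?_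
    simp only [finrank_euclideanSpace_fin, smul_eq_mul, ← mul_assoc, ← pow_add]
    exact integrableOn_pow_mul_juttnerProfile ha hγ 4
  have hK : ∫ l in Ioi γ, exp (-l) * (l ^ 2 - γ ^ 2) ^ (3 / 2 : ℝ) * l
      = 3 * γ ^ 3 * Kbessel 3 γ := by
    have hK3 := integral_exp_neg_mul_sq_sub_sq_rpow_eq_Kbessel 3 hγ.ne'
    have hibp := integral_exp_neg_mul_sq_sub_sq_rpow_add_one hγ.le (q := 3 / 2) (by norm_num)
    norm_num at hK3 hibp
    linarith
  have hsym := EuclideanSpace.card_mul_integral_sq_apply_mul_norm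
    continuous_juttnerProfile.measurable hint i
  rw [EuclideanSpace.integral_fun_norm_fin_three (fun r => r ^ 2 * juttnerProfile a γ r)] at hsym
  simp_rw [← mul_assoc, ← pow_add] at hsym
  rw [Fintype.card_fin, integral_pow_four_mul_juttnerProfile ha hγ, hK] at hsym
  have hsimp : (a / γ) ^ 5 * (3 * γ ^ 3 * Kbessel 3 γ) = 3 * (a ^ 5 * Kbessel 3 γ / γ ^ 2) := by
    field_simp
  rw [hsimp] at hsym
  linear_combination hsym / 3

theorem Juttner_ofLp (m c n₀ γ : ℝ) (x : EuclideanSpace ℝ (Fin 3)) :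
    Juttner m c n₀ γ x.ofLp
      = n₀ * γ / (4 * π * m ^ 3 * c ^ 3 * Kbessel 2 γ) * juttnerProfile (m * c) γ ‖x‖ := by
  rw [Juttner, juttnerProfile, pZero, dot3, EuclideanSpace.real_norm_sq_eq, mul_pow]
  simp only [sq]

theorem stmt10_general (m c n₀ γ : ℝ) (hm : 0 < m) (hc : 0 < c) (hγ : 0 < γ)
    (i : Fin 3) :
    c * ∫ p : Fin 3 → ℝ, (p i) ^ 2 * Juttner m c n₀ γ p
      = n₀ * m ^ 2 * c ^ 3 * Kbessel 3 γ / (γ * Kbessel 2 γ) := by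
  rw [← (EuclideanSpace.volume_preserving_symm_measurableEquiv_toLp (Fin 3)).integral_comp']
  simp_rw [MeasurableEquiv.toLp_symm_apply, Juttner_ofLp, mul_left_comm _ (n₀ * γ / _),
    integral_const_mul, integral_sq_apply_mul_juttnerProfile (mul_pos hm hc) hγ]
  field_simp

/-- For each `i ∈ {1,2,3}`, `c ∫_{ℝ³} p_i² J(p) dp = n₀m²c³K₃(γ)/(γK₂(γ))`. -/
theorem stmt10 (m c n₀ γ : ℝ) (hm : 0 < m) (hc : 0 < c) (hn : 0 < n₀) (hγ : 0 < γ)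
    (i : Fin 3) :
    c * ∫ p : Fin 3 → ℝ, (p i) ^ 2 * Juttner m c n₀ γ p
      = n₀ * m ^ 2 * c ^ 3 * Kbessel 3 γ / (γ * Kbessel 2 γ) :=
  stmt10_general m c n₀ γ hm hc hγ i
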